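/- arXiv:1609.08036 — 2 statements merged into one kernel-verified Lean document; each statement's English description precedes it below -/
import Mathlib

section
/- For all integers b ≥ 1 and natural numbers m, n with 2bm + n ≥ 4, the sum over pairs (i, j) with 0 ≤ i ≤ m, 0 ≤ j ≤ n, and 2 ≤ 2bi + j ≤ 2bm + n − 2 of (2bi + j − 2)! * (2b(m − i) + n − j − 2)! / (i! * j! * (m − i)! * (n − j)!) is at most 2π² * (2bm + n − 2)! / (m! * n!). -/
/-! Group the pairs `(i, j)` by `k = 2bi + j`. Since `C(m, i) ≤ C(2bm, 2bi)`, Vandermonde's identity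
bounds the weights `C(m, i) C(n, j)` of a fibre by `C(N, k)`, `N = 2bm + n`, which reduces the claim
to `∑ₖ C(N, k) (k-2)! (N-k-2)! ≤ 2π² (N-2)!`. The summand is `N! / (k(k-1)(N-k)(N-k-1))`, and
with `x = k-1`, `y = N-k-1`, `x + y = N-2`, one has `1/(x²y²) ≤ 2/(x+y)² (1/x² + 1/y²)`, so by
`∑ 1/x² ≤ π²/6` the sum is at most `N! · 2/(N-2)² · π²/3 ≤ 2π² (N-2)!` when `N ≥ 4`. -/

open Real Finset
open scoped Nat

theorem Nat.choose_mul_choose_le_add_choose (a c s t : ℕ) :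
    a.choose s * c.choose t ≤ (a + c).choose (s + t) := by
  rw [Nat.add_choose_eq]
  exact single_le_sum (f := fun p => a.choose p.1 * c.choose p.2) (fun _ _ => Nat.zero_le _)
    (a := (s, t)) (mem_antidiagonal.2 rfl)

theorem Nat.choose_le_choose_mul {d : ℕ} (hd : d ≠ 0) {m i : ℕ} (hi : i ≤ m) :
    m.choose i ≤ (d * m).choose (d * i) := by
  obtain ⟨e, rfl⟩ := Nat.exists_eq_succ_of_ne_zero hd
  have hpos : 0 < (e * m).choose (e * i) := Nat.choose_pos (Nat.mul_le_mul_left e hi)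
  calc m.choose i ≤ (e * m).choose (e * i) * m.choose i := Nat.le_mul_of_pos_left _ hpos
    _ ≤ (e * m + m).choose (e * i + i) := Nat.choose_mul_choose_le_add_choose _ _ _ _
    _ = ((e + 1) * m).choose ((e + 1) * i) := by rw [Nat.succ_mul, Nat.succ_mul]

theorem Nat.sum_choose_mul_choose_filter_le {d : ℕ} (hd : d ≠ 0) (m n k : ℕ) :
    ∑ p ∈ range (m + 1) ×ˢ range (n + 1) with d * p.1 + p.2 = k, m.choose p.1 * n.choose p.2
      ≤ (d * m + n).choose k := by
  set S := {p ∈ range (m + 1) ×ˢ range (n + 1) | d * p.1 + p.2 = k}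
  have hinj : Set.InjOn (fun p : ℕ × ℕ => (d * p.1, p.2)) S := fun p _ q _ h => by
    simp only [Prod.mk.injEq] at h
    exact Prod.ext (Nat.eq_of_mul_eq_mul_left (Nat.pos_of_ne_zero hd) h.1) h.2
  calc ∑ p ∈ S, m.choose p.1 * n.choose p.2
      ≤ ∑ p ∈ S, (d * m).choose (d * p.1) * n.choose p.2 := by
        refine sum_le_sum fun p hp => Nat.mul_le_mul_right _ (Nat.choose_le_choose_mul hd ?_)
        simp only [S, mem_filter, mem_product, mem_range] at hp
        omega
    _ = ∑ q ∈ S.image fun p => (d * p.1, p.2), (d * m).choose q.1 * n.choose q.2 :=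
        (sum_image (f := fun q => (d * m).choose q.1 * n.choose q.2) hinj).symm
    _ ≤ ∑ q ∈ antidiagonal k, (d * m).choose q.1 * n.choose q.2 := by
        refine sum_le_sum_of_subset fun q hq => ?_
        obtain ⟨p, hp, rfl⟩ := mem_image.1 hq
        exact mem_antidiagonal.2 (mem_filter.1 hp).2
    _ = (d * m + n).choose k := (Nat.add_choose_eq _ _ _).symm

theorem sum_choose_mul_choose_mul_le {R : Type*} [CommSemiring R] [PartialOrder R]
    [IsOrderedRing R] {d : ℕ} (hd : d ≠ 0) (m n : ℕ) {g : ℕ → R} (hg : ∀ k, 0 ≤ g k) :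
    ∑ i ∈ range (m + 1), ∑ j ∈ range (n + 1), (m.choose i * n.choose j : R) * g (d * i + j)
      ≤ ∑ k ∈ range (d * m + n + 1), ((d * m + n).choose k : R) * g k := by
  have hmaps : ∀ p ∈ range (m + 1) ×ˢ range (n + 1), d * p.1 + p.2 ∈ range (d * m + n + 1) := by
    intro p hp
    simp only [mem_product, mem_range] at hp ⊢
    have := Nat.mul_le_mul_left d (Nat.lt_succ_iff.1 hp.1)
    omega
  rw [← sum_product', ← sum_fiberwise_of_maps_to hmaps]
  refine sum_le_sum fun k _ => ?_
  calc ∑ p ∈ range (m + 1) ×ˢ range (n + 1) with d * p.1 + p.2 = k,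
        (m.choose p.1 * n.choose p.2 : R) * g (d * p.1 + p.2)
      = ((∑ p ∈ range (m + 1) ×ˢ range (n + 1) with d * p.1 + p.2 = k,
          m.choose p.1 * n.choose p.2 : ℕ) : R) * g k := by
        push_cast
        rw [sum_mul]
        exact sum_congr rfl fun p hp => by rw [(mem_filter.1 hp).2]
    _ ≤ ((d * m + n).choose k : R) * g k :=
        mul_le_mul_of_nonneg_right
          (Nat.mono_cast (Nat.sum_choose_mul_choose_filter_le hd m n k)) (hg k)

theorem one_div_sq_mul_sq_le {x y : ℝ} (hx : 0 < x) (hy : 0 < y) :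
    1 / (x ^ 2 * y ^ 2) ≤ 2 / (x + y) ^ 2 * (1 / x ^ 2 + 1 / y ^ 2) := by
  rw [div_add_div _ _ (by positivity) (by positivity), div_mul_div_comm,
    div_le_div_iff₀ (by positivity) (by positivity)]
  nlinarith [sq_nonneg (x - y), pow_pos (mul_pos hx hy) 2]

theorem sum_range_one_div_succ_sq_le (n : ℕ) :
    ∑ a ∈ range n, 1 / ((a : ℝ) + 1) ^ 2 ≤ π ^ 2 / 6 := by
  rw [← hasSum_zeta_two.tsum_eq]
  calc ∑ a ∈ range n, 1 / ((a : ℝ) + 1) ^ 2 = ∑ a ∈ range (n + 1), 1 / (a : ℝ) ^ 2 := by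
        simp [sum_range_succ']
    _ ≤ _ := hasSum_zeta_two.summable.sum_le_tsum _ fun _ _ => by positivity

theorem Nat.cast_choose_mul_factorial_mul_factorial (a c : ℕ) :
    ((a + 2 + (c + 2)).choose (a + 2) * a ! * c ! : ℝ)
      = (a + 2 + (c + 2))! / ((a + 1) * (a + 2) * (c + 1) * (c + 2)) := by
  have h := Nat.choose_mul_factorial_mul_factorial (Nat.le_add_right (a + 2) (c + 2))
  rw [Nat.add_sub_cancel_left, Nat.factorial_succ (a + 1), Nat.factorial_succ a,
    Nat.factorial_succ (c + 1), Nat.factorial_succ c] at h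
  rw [eq_div_iff (by positivity), ← h]
  push_cast
  ring

theorem Nat.cast_choose_mul_factorial_mul_factorial_le (a c : ℕ) :
    ((a + c + 4).choose (a + 2) * a ! * c ! : ℝ)
      ≤ (a + c + 4)! * (2 / ((a + c : ℕ) + 2 : ℝ) ^ 2)
        * (1 / ((a : ℝ) + 1) ^ 2 + 1 / ((c : ℝ) + 1) ^ 2) := by
  have hx : (0 : ℝ) < a + 1 := by positivity
  have hy : (0 : ℝ) < c + 1 := by positivity
  rw [show a + c + 4 = a + 2 + (c + 2) by ring, Nat.cast_choose_mul_factorial_mul_factorial]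
  calc ((a + 2 + (c + 2))! : ℝ) / ((a + 1) * (a + 2) * (c + 1) * (c + 2))
      ≤ (a + 2 + (c + 2))! * (1 / (((a : ℝ) + 1) ^ 2 * ((c : ℝ) + 1) ^ 2)) := by
        rw [mul_one_div]
        refine div_le_div_of_nonneg_left (by positivity) (by positivity) ?_
        nlinarith [mul_pos hx hy]
    _ ≤ (a + 2 + (c + 2))! * (2 / ((a + 1 : ℝ) + (c + 1)) ^ 2
          * (1 / ((a : ℝ) + 1) ^ 2 + 1 / ((c : ℝ) + 1) ^ 2)) := by
        gcongr
        exact one_div_sq_mul_sq_le hx hy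
    _ = _ := by
        push_cast
        ring_nf

theorem sum_antidiagonal_choose_mul_factorial_mul_factorial_le (L : ℕ) :
    ∑ p ∈ antidiagonal L, ((L + 4).choose (p.1 + 2) * p.1 ! * p.2 ! : ℝ)
      ≤ 2 * π ^ 2 * (L + 2)! := by
  set C : ℝ := (L + 4)! * (2 / ((L : ℝ) + 2) ^ 2)
  have hterm : ∀ p ∈ antidiagonal L, ((L + 4).choose (p.1 + 2) * p.1 ! * p.2 ! : ℝ)
      ≤ C * (1 / ((p.1 : ℝ) + 1) ^ 2 + 1 / ((p.2 : ℝ) + 1) ^ 2) := by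
    rintro ⟨a, c⟩ hp
    obtain rfl : a + c = L := mem_antidiagonal.1 hp
    exact Nat.cast_choose_mul_factorial_mul_factorial_le a c
  have hsum₁ : ∑ p ∈ antidiagonal L, 1 / ((p.1 : ℝ) + 1) ^ 2 ≤ π ^ 2 / 6 := by
    rw [Nat.sum_antidiagonal_eq_sum_range_succ (fun a _ => 1 / ((a : ℝ) + 1) ^ 2)]
    exact sum_range_one_div_succ_sq_le _
  have hsum₂ : ∑ p ∈ antidiagonal L, 1 / ((p.2 : ℝ) + 1) ^ 2 ≤ π ^ 2 / 6 := by
    rw [← Nat.sum_antidiagonal_swap]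
    exact hsum₁
  have hfac : ((L + 4)! : ℝ) = (L + 4) * (L + 3) * (L + 2)! := by
    rw [Nat.factorial_succ (L + 3), Nat.factorial_succ (L + 2)]
    push_cast
    ring
  have hquad : ((L : ℝ) + 4) * (L + 3) ≤ 3 * (L + 2) ^ 2 := by nlinarith
  calc ∑ p ∈ antidiagonal L, ((L + 4).choose (p.1 + 2) * p.1 ! * p.2 ! : ℝ)
      ≤ ∑ p ∈ antidiagonal L, C * (1 / ((p.1 : ℝ) + 1) ^ 2 + 1 / ((p.2 : ℝ) + 1) ^ 2) :=
        sum_le_sum hterm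
    _ = C * (∑ p ∈ antidiagonal L, 1 / ((p.1 : ℝ) + 1) ^ 2
          + ∑ p ∈ antidiagonal L, 1 / ((p.2 : ℝ) + 1) ^ 2) := by
        rw [← sum_add_distrib, mul_sum]
    _ ≤ C * (π ^ 2 / 6 + π ^ 2 / 6) := by gcongr
    _ ≤ 2 * π ^ 2 * (L + 2)! := by
        have hpos : (0 : ℝ) < 3 * (L + 2) ^ 2 := by positivity
        rw [show C * (π ^ 2 / 6 + π ^ 2 / 6) = ((L : ℝ) + 4) * (L + 3) / (3 * (L + 2) ^ 2)
            * (2 * π ^ 2 * (L + 2)!) by simp only [C, hfac]; field_simp; ring]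
        exact mul_le_of_le_one_left (by positivity) ((div_le_one hpos).2 hquad)

theorem sum_range_choose_mul_factorial_mul_factorial_le {N : ℕ} (hN : 4 ≤ N) :
    ∑ k ∈ range (N + 1), (N.choose k : ℝ)
        * (if 2 ≤ k ∧ k ≤ N - 2 then ((k - 2)! * (N - k - 2)! : ℝ) else 0)
      ≤ 2 * π ^ 2 * (N - 2)! := by
  obtain ⟨L, rfl⟩ : ∃ L, N = L + 4 := ⟨N - 4, by omega⟩
  simp only [mul_ite, mul_zero]
  rw [← sum_filter]
  calc _ = ∑ p ∈ antidiagonal L, ((L + 4).choose (p.1 + 2) * p.1 ! * p.2 ! : ℝ) := by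
        refine (sum_nbij' (fun p => p.1 + 2) (fun k => (k - 2, L + 2 - k)) ?_ ?_ ?_ ?_ ?_).symm <;>
          simp only [HasAntidiagonal.mem_antidiagonal, mem_filter, mem_range, Prod.forall,
            Prod.mk.injEq]
        any_goals omega
        rintro a c rfl
        rw [Nat.add_sub_cancel, show a + c + 4 - (a + 2) - 2 = c by omega, mul_assoc]
    _ ≤ _ := by simpa using sum_antidiagonal_choose_mul_factorial_mul_factorial_le L

theorem Nat.mul_sub_add_sub_eq {d m n i j : ℕ} (hi : i ≤ m) (hj : j ≤ n) :
    d * (m - i) + n - j = d * m + n - (d * i + j) := by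
  have := Nat.mul_le_mul_left d hi
  rw [Nat.mul_sub]
  omega

theorem div_factorial_mul_eq_choose_mul_choose {i j m n : ℕ} (hi : i ≤ m) (hj : j ≤ n) (x : ℝ) :
    x / (i ! * j ! * (m - i)! * (n - j)!) = m.choose i * n.choose j * (x / (m ! * n !)) := by
  rw [← Nat.choose_mul_factorial_mul_factorial hi, ← Nat.choose_mul_factorial_mul_factorial hj]
  have hci : (m.choose i : ℝ) ≠ 0 := Nat.cast_ne_zero.2 (Nat.choose_pos hi).ne'
  have hcj : (n.choose j : ℝ) ≠ 0 := Nat.cast_ne_zero.2 (Nat.choose_pos hj).ne'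
  push_cast
  field_simp

/-- Key combinatorial inequality (parareg_combo): for `b ≥ 1` and `2bm + n ≥ 4`,
`∑_{2 ≤ 2bi+j ≤ 2bm+n-2} (2bi+j-2)! (2b(m-i)+n-j-2)! / (i! j! (m-i)! (n-j)!)
  ≤ 2π² (2bm+n-2)! / (m! n!)`. -/
theorem parareg_combo (b m n : ℕ) (hb : 1 ≤ b) (hmn : 4 ≤ 2 * b * m + n) :
    ∑ i ∈ Finset.range (m + 1), ∑ j ∈ Finset.range (n + 1),
        (if 2 ≤ 2 * b * i + j ∧ 2 * b * i + j ≤ 2 * b * m + n - 2 then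
          (Nat.factorial (2 * b * i + j - 2) : ℝ)
            * (Nat.factorial (2 * b * (m - i) + n - j - 2) : ℝ)
            / ((Nat.factorial i : ℝ) * (Nat.factorial j : ℝ)
              * (Nat.factorial (m - i) : ℝ) * (Nat.factorial (n - j) : ℝ))
        else 0)
      ≤ 2 * π ^ 2 * (Nat.factorial (2 * b * m + n - 2) : ℝ)
          / ((Nat.factorial m : ℝ) * (Nat.factorial n : ℝ)) := by
  set N := 2 * b * m + n
  set w : ℕ → ℝ := fun k => if 2 ≤ k ∧ k ≤ N - 2 then ((k - 2)! * (N - k - 2)! : ℝ) else 0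
  have hw : ∀ k, 0 ≤ w k / (m ! * n !) := fun k => by positivity
  have hterm : ∀ i ∈ range (m + 1), ∀ j ∈ range (n + 1),
      (if 2 ≤ 2 * b * i + j ∧ 2 * b * i + j ≤ N - 2 then
        ((2 * b * i + j - 2)! * (2 * b * (m - i) + n - j - 2)! : ℝ)
          / (i ! * j ! * (m - i)! * (n - j)!) else 0)
        = m.choose i * n.choose j * (w (2 * b * i + j) / (m ! * n !)) := by
    intro i hi j hj
    rw [mem_range_succ_iff] at hi hj
    simp only [w, Nat.mul_sub_add_sub_eq hi hj]
    split_ifs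
    · exact div_factorial_mul_eq_choose_mul_choose hi hj _
    · simp
  calc _ = ∑ i ∈ range (m + 1), ∑ j ∈ range (n + 1),
          (m.choose i * n.choose j : ℝ) * (w (2 * b * i + j) / (m ! * n !)) :=
        sum_congr rfl fun i hi => sum_congr rfl (hterm i hi)
    _ ≤ ∑ k ∈ range (N + 1), (N.choose k : ℝ) * (w k / (m ! * n !)) :=
        sum_choose_mul_choose_mul_le (by omega) m n hw
    _ = (∑ k ∈ range (N + 1), (N.choose k : ℝ) * w k) / (m ! * n !) := by
        simp only [mul_div_assoc', sum_div]
    _ ≤ _ := div_le_div_of_nonneg_right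
        (sum_range_choose_mul_factorial_mul_factorial_le hmn) (by positivity)
end

section
/- Let q ≥ 2, and for k = 1, …, q let θ̃_k > 0 be real and a_k ∈ ℝ^m with m ≥ 2. Write a_k = (a_k¹, a_k², ã_k) with ã_k ∈ ℝ^{m−2}. If the real number D' := ∑ θ̃_k(1+(a_k¹)²+|ã_k|²) · [∑θ̃_k · ∑θ̃_k(a_k¹)² − (∑θ̃_k a_k¹)²] + ∑ θ̃_k(1+(a_k²)²+|ã_k|²) · [∑θ̃_k · ∑θ̃_k(a_k²)² − (∑θ̃_k a_k²)²] + ∑θ̃_k|a_k|² · [∑θ̃_k(a_k¹)² · ∑θ̃_k(a_k²)² − (∑θ̃_k a_k¹a_k²)²] + 2[∑θ̃_k · ∑θ̃_k(a_k¹)² · ∑θ̃_k(a_k²)² − ∑θ̃_k a_k¹ · ∑θ̃_k a_k² · ∑θ̃_k a_k¹a_k²] + ∑θ̃_k|ã_k|² · (∑θ̃_k(1+|a_k|²))² equals 0, then a_1 = a_2 = ⋯ = a_q. -/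
lemma gap_eq' (q : ℕ) (θ x : Fin q → ℝ) :
    2 * ((∑ k, θ k) * (∑ k, θ k * x k ^ 2) - (∑ k, θ k * x k) ^ 2)
      = ∑ k, ∑ l, θ k * θ l * (x k - x l) ^ 2 := by
  have h3 : ∀ k l : Fin q, θ k * θ l * (x k - x l) ^ 2 =
      (θ k * x k ^ 2) * θ l - 2 * ((θ k * x k) * (θ l * x l)) + θ k * (θ l * x l ^ 2) := by
    intro k l; ring
  simp_rw [h3, Finset.sum_add_distrib, Finset.sum_sub_distrib]
  simp_rw [← Finset.mul_sum]
  simp_rw [← Finset.sum_mul]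
  ring

lemma wcs' (q : ℕ) (θ x y : Fin q → ℝ) (hθ : ∀ k, 0 ≤ θ k) :
    (∑ k, θ k * (x k * y k)) ^ 2 ≤ (∑ k, θ k * x k ^ 2) * (∑ k, θ k * y k ^ 2) := by
  have h := Finset.sum_mul_sq_le_sq_mul_sq Finset.univ
    (fun k => Real.sqrt (θ k) * x k) (fun k => Real.sqrt (θ k) * y k)
  have e1 : ∀ k : Fin q, (Real.sqrt (θ k) * x k) * (Real.sqrt (θ k) * y k)
      = θ k * (x k * y k) := by
    intro k
    have hss := Real.mul_self_sqrt (hθ k)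
    calc (Real.sqrt (θ k) * x k) * (Real.sqrt (θ k) * y k)
        = (Real.sqrt (θ k) * Real.sqrt (θ k)) * (x k * y k) := by ring
      _ = θ k * (x k * y k) := by rw [hss]
  have e2 : ∀ k : Fin q, (Real.sqrt (θ k) * x k) ^ 2 = θ k * x k ^ 2 := by
    intro k
    rw [mul_pow, Real.sq_sqrt (hθ k)]
  have e3 : ∀ k : Fin q, (Real.sqrt (θ k) * y k) ^ 2 = θ k * y k ^ 2 := by
    intro k
    rw [mul_pow, Real.sq_sqrt (hθ k)]
  simp_rw [e1, e2, e3] at h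
  exact h

lemma gap_nonneg' (q : ℕ) (θ x : Fin q → ℝ) (hθ : ∀ k, 0 ≤ θ k) :
    0 ≤ (∑ k, θ k) * (∑ k, θ k * x k ^ 2) - (∑ k, θ k * x k) ^ 2 := by
  have h := wcs' q θ (fun _ => 1) x hθ
  simp only [one_mul, one_pow, mul_one] at h
  linarith

lemma gap_zero' (q : ℕ) (θ x : Fin q → ℝ) (hθ : ∀ k, 0 < θ k)
    (h : (∑ k, θ k) * (∑ k, θ k * x k ^ 2) - (∑ k, θ k * x k) ^ 2 = 0) :
    ∀ k l, x k = x l := by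
  have hid := gap_eq' q θ x
  rw [h, mul_zero] at hid
  have hz : ∀ k ∈ Finset.univ, ∑ l, θ k * θ l * (x k - x l) ^ 2 = 0 := by
    rw [← Finset.sum_eq_zero_iff_of_nonneg]
    · exact hid.symm
    · intro k _
      exact Finset.sum_nonneg fun l _ => mul_nonneg (mul_nonneg (hθ k).le (hθ l).le) (sq_nonneg _)
  intro k l
  have hz2 : θ k * θ l * (x k - x l) ^ 2 = 0 :=
    (Finset.sum_eq_zero_iff_of_nonneg
      (fun l _ => mul_nonneg (mul_nonneg (hθ k).le (hθ l).le) (sq_nonneg _))).mp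
      (hz k (Finset.mem_univ k)) l (Finset.mem_univ l)
  have hpos : 0 < θ k * θ l := mul_pos (hθ k) (hθ l)
  have hsq : (x k - x l) ^ 2 = 0 := by
    rcases mul_eq_zero.mp hz2 with h' | h'
    · exact absurd h' hpos.ne'
    · exact h'
  have := pow_eq_zero_iff (n := 2) (by norm_num) |>.mp hsq
  linarith

set_option maxHeartbeats 1000000 in
/-- If the determinant expression `D'` (a sum of Cauchy–Schwarz–nonnegative terms)
vanishes, then all the vectors `a_k ∈ ℝ^m` coincide.  Here `a_k¹ = a k ⟨0, by omega⟩`,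
`a_k² = a k ⟨1, by omega⟩`, `ã_k` are the coordinates of index ≥ 2, `|ã_k|² = ∑_{i≥2} (a k i)²`,
and `|a_k|² = ∑_i (a k i)²`. -/
theorem det_zero_implies_all_equal (q m : ℕ) (hq : 2 ≤ q) (hm : 2 ≤ m)
    (θ : Fin q → ℝ) (hθ : ∀ k, 0 < θ k) (a : Fin q → Fin m → ℝ)
    (hD :
      (∑ k, θ k * (1 + (a k ⟨0, by omega⟩) ^ 2 + ∑ i : Fin m, if 2 ≤ (i : ℕ) then (a k i) ^ 2 else 0))
          * ((∑ k, θ k) * (∑ k, θ k * (a k ⟨0, by omega⟩) ^ 2) - (∑ k, θ k * a k ⟨0, by omega⟩) ^ 2)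
        + (∑ k, θ k * (1 + (a k ⟨1, by omega⟩) ^ 2 + ∑ i : Fin m, if 2 ≤ (i : ℕ) then (a k i) ^ 2 else 0))
          * ((∑ k, θ k) * (∑ k, θ k * (a k ⟨1, by omega⟩) ^ 2) - (∑ k, θ k * a k ⟨1, by omega⟩) ^ 2)
        + (∑ k, θ k * ∑ i, (a k i) ^ 2)
          * ((∑ k, θ k * (a k ⟨0, by omega⟩) ^ 2) * (∑ k, θ k * (a k ⟨1, by omega⟩) ^ 2)
            - (∑ k, θ k * (a k ⟨0, by omega⟩ * a k ⟨1, by omega⟩)) ^ 2)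
        + 2 * ((∑ k, θ k) * (∑ k, θ k * (a k ⟨0, by omega⟩) ^ 2) * (∑ k, θ k * (a k ⟨1, by omega⟩) ^ 2)
            - (∑ k, θ k * a k ⟨0, by omega⟩) * (∑ k, θ k * a k ⟨1, by omega⟩) * (∑ k, θ k * (a k ⟨0, by omega⟩ * a k ⟨1, by omega⟩)))
        + (∑ k, θ k * ∑ i : Fin m, if 2 ≤ (i : ℕ) then (a k i) ^ 2 else 0)
          * (∑ k, θ k * (1 + ∑ i, (a k i) ^ 2)) ^ 2
      = 0) :
    ∀ k l, a k = a l := by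
  have hne : (Finset.univ : Finset (Fin q)).Nonempty := ⟨⟨0, by omega⟩, Finset.mem_univ _⟩
  have htail : ∀ k, (0:ℝ) ≤ ∑ i : Fin m, if 2 ≤ (i : ℕ) then (a k i) ^ 2 else 0 := fun k =>
    Finset.sum_nonneg fun i _ => by positivity
  have hfull : ∀ k, (0:ℝ) ≤ ∑ i, (a k i) ^ 2 := fun k =>
    Finset.sum_nonneg fun i _ => sq_nonneg _
  -- positivity / nonnegativity of the coefficients
  have hc1 : 0 < ∑ k, θ k * (1 + (a k ⟨0, by omega⟩) ^ 2 + ∑ i : Fin m, if 2 ≤ (i : ℕ) then (a k i) ^ 2 else 0) :=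
    Finset.sum_pos (fun k _ => mul_pos (hθ k)
      (by nlinarith [sq_nonneg (a k (⟨0, by omega⟩ : Fin m)), htail k])) hne
  have hc2 : 0 < ∑ k, θ k * (1 + (a k ⟨1, by omega⟩) ^ 2 + ∑ i : Fin m, if 2 ≤ (i : ℕ) then (a k i) ^ 2 else 0) :=
    Finset.sum_pos (fun k _ => mul_pos (hθ k)
      (by nlinarith [sq_nonneg (a k (⟨1, by omega⟩ : Fin m)), htail k])) hne
  have hc3 : 0 ≤ ∑ k, θ k * ∑ i, (a k i) ^ 2 :=
    Finset.sum_nonneg fun k _ => mul_nonneg (hθ k).le (hfull k)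
  have hc5 : 0 ≤ ∑ k, θ k * ∑ i : Fin m, if 2 ≤ (i : ℕ) then (a k i) ^ 2 else 0 :=
    Finset.sum_nonneg fun k _ => mul_nonneg (hθ k).le (htail k)
  have hS : 0 < ∑ k, θ k * (1 + ∑ i, (a k i) ^ 2) :=
    Finset.sum_pos (fun k _ => mul_pos (hθ k) (by nlinarith [hfull k])) hne
  -- nonnegativity of the gaps
  have hg1 : 0 ≤ (∑ k, θ k) * (∑ k, θ k * (a k ⟨0, by omega⟩) ^ 2) - (∑ k, θ k * a k ⟨0, by omega⟩) ^ 2 :=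
    gap_nonneg' q θ (fun k => a k ⟨0, by omega⟩) (fun k => (hθ k).le)
  have hg2 : 0 ≤ (∑ k, θ k) * (∑ k, θ k * (a k ⟨1, by omega⟩) ^ 2) - (∑ k, θ k * a k ⟨1, by omega⟩) ^ 2 :=
    gap_nonneg' q θ (fun k => a k ⟨1, by omega⟩) (fun k => (hθ k).le)
  have hg3 : 0 ≤ (∑ k, θ k * (a k ⟨0, by omega⟩) ^ 2) * (∑ k, θ k * (a k ⟨1, by omega⟩) ^ 2)
      - (∑ k, θ k * (a k ⟨0, by omega⟩ * a k ⟨1, by omega⟩)) ^ 2 := by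
    have h := wcs' q θ (fun k => a k ⟨0, by omega⟩) (fun k => a k ⟨1, by omega⟩)
      (fun k => (hθ k).le)
    linarith
  have hA : 0 < ∑ k, θ k := Finset.sum_pos (fun k _ => hθ k) hne
  have hX : 0 ≤ ∑ k, θ k * (a k ⟨0, by omega⟩) ^ 2 :=
    Finset.sum_nonneg fun k _ => mul_nonneg (hθ k).le (sq_nonneg _)
  have hY : 0 ≤ ∑ k, θ k * (a k ⟨1, by omega⟩) ^ 2 :=
    Finset.sum_nonneg fun k _ => mul_nonneg (hθ k).le (sq_nonneg _)
  have hg4 : 0 ≤ (∑ k, θ k) * (∑ k, θ k * (a k ⟨0, by omega⟩) ^ 2) * (∑ k, θ k * (a k ⟨1, by omega⟩) ^ 2)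
      - (∑ k, θ k * a k ⟨0, by omega⟩) * (∑ k, θ k * a k ⟨1, by omega⟩) * (∑ k, θ k * (a k ⟨0, by omega⟩ * a k ⟨1, by omega⟩)) := by
    set A := ∑ k, θ k
    set X := ∑ k, θ k * (a k ⟨0, by omega⟩) ^ 2
    set Y := ∑ k, θ k * (a k ⟨1, by omega⟩) ^ 2
    set P := ∑ k, θ k * a k ⟨0, by omega⟩
    set Q := ∑ k, θ k * a k ⟨1, by omega⟩
    set R := ∑ k, θ k * (a k ⟨0, by omega⟩ * a k ⟨1, by omega⟩)
    have e1 : P ^ 2 * Q ^ 2 ≤ (A * X) * (A * Y) :=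
      mul_le_mul (by linarith) (by linarith) (sq_nonneg _) (mul_nonneg hA.le hX)
    have e2 : (P ^ 2 * Q ^ 2) * R ^ 2 ≤ ((A * X) * (A * Y)) * (X * Y) :=
      mul_le_mul e1 (by linarith) (sq_nonneg _)
        (mul_nonneg (mul_nonneg hA.le hX) (mul_nonneg hA.le hY))
    have e3 : (P * Q * R) ^ 2 ≤ (A * X * Y) ^ 2 := by nlinarith [e2]
    nlinarith [e3, mul_nonneg (mul_nonneg hA.le hX) hY]
  -- every bracketed product is nonnegative, so each vanishes
  have hT1 : (∑ k, θ k * (1 + (a k ⟨0, by omega⟩) ^ 2 + ∑ i : Fin m, if 2 ≤ (i : ℕ) then (a k i) ^ 2 else 0))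
      * ((∑ k, θ k) * (∑ k, θ k * (a k ⟨0, by omega⟩) ^ 2) - (∑ k, θ k * a k ⟨0, by omega⟩) ^ 2) = 0 := by
    linarith [mul_nonneg hc1.le hg1, mul_nonneg hc2.le hg2, mul_nonneg hc3 hg3, hg4,
      mul_nonneg hc5 (sq_nonneg (∑ k, θ k * (1 + ∑ i, (a k i) ^ 2)))]
  have hT2 : (∑ k, θ k * (1 + (a k ⟨1, by omega⟩) ^ 2 + ∑ i : Fin m, if 2 ≤ (i : ℕ) then (a k i) ^ 2 else 0))
      * ((∑ k, θ k) * (∑ k, θ k * (a k ⟨1, by omega⟩) ^ 2) - (∑ k, θ k * a k ⟨1, by omega⟩) ^ 2) = 0 := by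
    linarith [mul_nonneg hc1.le hg1, mul_nonneg hc2.le hg2, mul_nonneg hc3 hg3, hg4,
      mul_nonneg hc5 (sq_nonneg (∑ k, θ k * (1 + ∑ i, (a k i) ^ 2)))]
  have hT5 : (∑ k, θ k * ∑ i : Fin m, if 2 ≤ (i : ℕ) then (a k i) ^ 2 else 0)
      * (∑ k, θ k * (1 + ∑ i, (a k i) ^ 2)) ^ 2 = 0 := by
    linarith [mul_nonneg hc1.le hg1, mul_nonneg hc2.le hg2, mul_nonneg hc3 hg3, hg4,
      mul_nonneg hc5 (sq_nonneg (∑ k, θ k * (1 + ∑ i, (a k i) ^ 2)))]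
  -- conclusions
  have hg1z : (∑ k, θ k) * (∑ k, θ k * (a k ⟨0, by omega⟩) ^ 2) - (∑ k, θ k * a k ⟨0, by omega⟩) ^ 2 = 0 :=
    (mul_eq_zero.mp hT1).resolve_left hc1.ne'
  have hg2z : (∑ k, θ k) * (∑ k, θ k * (a k ⟨1, by omega⟩) ^ 2) - (∑ k, θ k * a k ⟨1, by omega⟩) ^ 2 = 0 :=
    (mul_eq_zero.mp hT2).resolve_left hc2.ne'
  have h0 : ∀ k l, a k ⟨0, by omega⟩ = a l ⟨0, by omega⟩ :=
    gap_zero' q θ (fun k => a k ⟨0, by omega⟩) hθ hg1z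
  have h1 : ∀ k l, a k ⟨1, by omega⟩ = a l ⟨1, by omega⟩ :=
    gap_zero' q θ (fun k => a k ⟨1, by omega⟩) hθ hg2z
  -- tail coordinates vanish
  have hc5z : (∑ k, θ k * ∑ i : Fin m, if 2 ≤ (i : ℕ) then (a k i) ^ 2 else 0) = 0 :=
    (mul_eq_zero.mp hT5).resolve_right (pow_ne_zero 2 hS.ne')
  have htailz : ∀ k : Fin q, ∀ i : Fin m, 2 ≤ (i : ℕ) → a k i = 0 := by
    intro k i hi
    have hk : θ k * (∑ i : Fin m, if 2 ≤ (i : ℕ) then (a k i) ^ 2 else 0) = 0 :=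
      (Finset.sum_eq_zero_iff_of_nonneg
        (fun k _ => mul_nonneg (hθ k).le (htail k))).mp hc5z k (Finset.mem_univ k)
    have hsum : (∑ i : Fin m, if 2 ≤ (i : ℕ) then (a k i) ^ 2 else 0) = 0 :=
      (mul_eq_zero.mp hk).resolve_left (hθ k).ne'
    have hterm : (if 2 ≤ (i : ℕ) then (a k i) ^ 2 else 0) = 0 :=
      (Finset.sum_eq_zero_iff_of_nonneg
        (fun i _ => by positivity)).mp hsum i (Finset.mem_univ i)
    rw [if_pos hi] at hterm
    exact pow_eq_zero_iff (n := 2) (by norm_num) |>.mp hterm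
  intro k l
  funext i
  rcases Nat.lt_or_ge (i : ℕ) 2 with h | h
  · have : i = (⟨0, by omega⟩ : Fin m) ∨ i = (⟨1, by omega⟩ : Fin m) := by
      have h' : (i : ℕ) = 0 ∨ (i : ℕ) = 1 := by omega
      rcases h' with h' | h'
      · exact Or.inl (Fin.ext h')
      · exact Or.inr (Fin.ext h')
    rcases this with hi | hi
    · rw [hi]; exact h0 k l
    · rw [hi]; exact h1 k l
  · rw [htailz k i h, htailz l i h]
end
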